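/- Let p be a probability density on [0,1]^d that factorizes autoregressively as p(u_1,...,u_d) = p_1(u_1) · p_2(u_2 | u_1) ⋯ p_d(u_d | u_1,...,u_{d-1}), where p_1 is the density of the uniform distribution on [0,1]. If p is invariant under all permutations of its arguments, then every one-dimensional marginal of p is uniform on [0,1], i.e., p is the density of a valid copula. -/

import Mathlib

/-!
Swapping the coordinates `0` and `k` leaves `p` unchanged, so the `k`-th marginal equals the
first one. That one is computed by integrating out `u_{d-1}, …, u_1` in turn: the factor
`q_j` is the only one that depends on `u_j`, and it integrates to `1`, so all that remains is
`∫₀ᵗ q_0 = t`.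
-/

open MeasureTheory ProbabilityTheory Real Filter
open scoped ENNReal

section Autoregressive

variable {α : Type*} [MeasurableSpace α] {d : ℕ} (μ : Fin d → Measure α)
  [∀ i, SigmaFinite (μ i)] {f : Fin d → (Fin d → α) → ℝ≥0∞}

theorem lmarginal_prod_autoregressive (hf_meas : ∀ k, Measurable (f k))
    (hf_dep : ∀ k x y, (∀ j ≤ k, x j = y j) → f k x = f k y) {m : ℕ} (hm : m ≤ d)
    (hf_norm : ∀ k : Fin d, m ≤ k → ∀ x,
      ∫⁻ s, f k (Function.update x k s) ∂μ k = 1) :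
    ∫⋯∫⁻_({i | m ≤ (i : ℕ)} : Finset (Fin d)), (fun x => ∏ k, f k x) ∂μ =
      fun x => ∏ k ∈ ({k | (k : ℕ) < m} : Finset (Fin d)), f k x := by
  induction hm using Nat.decreasingInduction with
  | self =>
    have hempty : ({i | d ≤ (i : ℕ)} : Finset (Fin d)) = ∅ :=
      Finset.filter_false_of_mem fun i _ => by omega
    have hall : ({k | (k : ℕ) < d} : Finset (Fin d)) = Finset.univ :=
      Finset.filter_true_of_mem fun k _ => k.isLt
    rw [hempty, hall, lmarginal_empty]
  | of_succ m hm ih =>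
    set i : Fin d := ⟨m, hm⟩
    have hge : ({j | m ≤ (j : ℕ)} : Finset (Fin d)) =
        insert i ({j | m + 1 ≤ (j : ℕ)} : Finset (Fin d)) := by
      ext j
      simp only [Finset.mem_filter, Finset.mem_univ, true_and, Finset.mem_insert, Fin.ext_iff,
        i]
      omega
    have hlt : ({j | (j : ℕ) < m + 1} : Finset (Fin d)) =
        insert i ({j | (j : ℕ) < m} : Finset (Fin d)) := by
      ext j
      simp only [Finset.mem_filter, Finset.mem_univ, true_and, Finset.mem_insert, Fin.ext_iff,
        i]
      omega
    have hpast : ∀ x s, ∀ k ∈ ({j | (j : ℕ) < m} : Finset (Fin d)),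
        f k (Function.update x i s) = f k x := by
      intro x s k hk
      refine hf_dep k _ _ fun j hj => Function.update_of_ne ?_ _ _
      rintro rfl
      simp only [Finset.mem_filter, Finset.mem_univ, true_and] at hk
      exact absurd (Fin.le_def.mp hj) (by simp only [i]; omega)
    ext x
    rw [hge, lmarginal_insert _ (Finset.measurable_prod _ fun k _ => hf_meas k) (by simp [i]),
      ih fun k hk => hf_norm k (by omega), hlt]
    have hi : i ∉ ({j | (j : ℕ) < m} : Finset (Fin d)) := by simp [i]
    simp_rw [Finset.prod_insert hi, Finset.prod_congr rfl (hpast x _)]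
    rw [lintegral_mul_const (f := fun s => f i (Function.update x i s)) _
      ((hf_meas i).comp (measurable_update x)), hf_norm i le_rfl x, one_mul]

theorem lintegral_pi_prod_autoregressive (hd : 0 < d) (hf_meas : ∀ k, Measurable (f k))
    (hf_dep : ∀ k x y, (∀ j ≤ k, x j = y j) → f k x = f k y)
    (hf_norm : ∀ k : Fin d, 0 < (k : ℕ) → ∀ x,
      ∫⁻ s, f k (Function.update x k s) ∂μ k = 1)
    (x : Fin d → α) :
    ∫⁻ y, ∏ k, f k y ∂Measure.pi μ =
      ∫⁻ s, f ⟨0, hd⟩ (Function.update x ⟨0, hd⟩ s) ∂μ ⟨0, hd⟩ := by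
  have huniv : (Finset.univ : Finset (Fin d)) =
      insert ⟨0, hd⟩ ({i | 1 ≤ (i : ℕ)} : Finset (Fin d)) := by
    ext j
    simp only [Finset.mem_univ, Finset.mem_insert, Finset.mem_filter, true_and, Fin.ext_iff,
      true_iff]
    omega
  have hfirst : ({k | (k : ℕ) < 1} : Finset (Fin d)) = {⟨0, hd⟩} := by
    ext j
    simp [Fin.ext_iff]
  rw [lintegral_eq_lmarginal_univ x, huniv,
    lmarginal_insert _ (Finset.measurable_prod _ fun k _ => hf_meas k) (by simp), ← huniv,
    lmarginal_prod_autoregressive μ hf_meas hf_dep hd hf_norm, hfirst]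
  simp only [Finset.prod_singleton]

end Autoregressive

theorem setOf_apply_le_inter_univ_pi_Icc {ι : Type*} [DecidableEq ι] (k : ι) {a b t : ℝ}
    (ht : t ≤ b) :
    {u : ι → ℝ | u k ≤ t} ∩ Set.univ.pi (fun _ => Set.Icc a b) =
      Set.univ.pi (Function.update (fun _ => Set.Icc a b) k (Set.Icc a t)) := by
  ext u
  simp only [Set.mem_inter_iff, Set.mem_ofPred_eq, Set.mem_univ_pi]
  constructor
  · rintro ⟨hk, hu⟩ i
    rcases eq_or_ne i k with rfl | hi
    · simpa using ⟨(hu i).1, hk⟩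
    · simpa [hi] using hu i
  · intro hu
    have hk : u k ∈ Set.Icc a t := by simpa using hu k
    refine ⟨hk.2, fun i => ?_⟩
    rcases eq_or_ne i k with rfl | hi
    · exact ⟨hk.1, hk.2.trans ht⟩
    · simpa [hi] using hu i

theorem setIntegral_univ_pi_comp_perm {ι α E : Type*} [Fintype ι] [MeasureSpace α]
    [SigmaFinite (volume : Measure α)] [NormedAddCommGroup E] [NormedSpace ℝ E]
    (σ : Equiv.Perm ι) (S : ι → Set α) {g : (ι → α) → E}
    (hg : ∀ u, g (u ∘ σ) = g u) :
    ∫ u in Set.univ.pi (S ∘ σ), g u = ∫ u in Set.univ.pi S, g u := by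
  set e := MeasurableEquiv.piCongrLeft (fun _ : ι => α) σ
  have hge : ∀ u, g (e u) = g u := fun u => by
    rw [← hg (e u)]
    congr 1
    ext i
    exact Equiv.piCongrLeft_apply_apply (fun _ => α) σ u i
  calc ∫ u in Set.univ.pi (S ∘ σ), g u = ∫ u in e ⁻¹' Set.univ.pi S, g (e u) := by
        simp only [hge]
        rw [MeasurableEquiv.coe_piCongrLeft, Equiv.piCongrLeft_preimage_univ_pi]
        rfl
    _ = ∫ u in Set.univ.pi S, g u :=
        (volume_measurePreserving_piCongrLeft (fun _ => α) σ).setIntegral_preimage_emb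
          e.measurableEmbedding g _

theorem attentional_copula_valid (d : ℕ) (hd : 0 < d)
    (p : (Fin d → ℝ) → ℝ) (q : Fin d → (Fin d → ℝ) → ℝ)
    (hq_meas : ∀ k, Measurable (q k)) (hq_nonneg : ∀ k u, 0 ≤ q k u)
    (hq_dep : ∀ k : Fin d, ∀ u v : Fin d → ℝ, (∀ j ≤ k, u j = v j) → q k u = q k v)
    (hq_norm : ∀ k : Fin d, ∀ u : Fin d → ℝ,
      ∫ t in Set.Icc (0:ℝ) 1, q k (Function.update u k t) = 1)
    (hq0 : ∀ u : Fin d → ℝ, u ⟨0, hd⟩ ∈ Set.Icc (0:ℝ) 1 → q ⟨0, hd⟩ u = 1)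
    (hp : ∀ u, p u = ∏ k, q k u)
    (hinv : ∀ σ : Equiv.Perm (Fin d), ∀ u : Fin d → ℝ, p (u ∘ σ) = p u) :
    ∀ k : Fin d, ∀ t ∈ Set.Icc (0:ℝ) 1,
      ∫ u in {u : Fin d → ℝ | u k ≤ t} ∩ Set.univ.pi (fun _ => Set.Icc (0:ℝ) 1),
        p u = t := by
  intro k t ht
  set i0 : Fin d := ⟨0, hd⟩
  set I : Fin d → Set ℝ := fun _ => Set.Icc 0 1
  have hswap : Function.update I k (Set.Icc 0 t) ∘ Equiv.swap i0 k =
      Function.update I i0 (Set.Icc 0 t) := by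
    rw [Function.update_comp_equiv, Equiv.symm_swap, Equiv.swap_apply_right]
    rfl
  have hlint : ∫⁻ u, ENNReal.ofReal (p u)
      ∂Measure.pi (fun i => volume.restrict (Function.update I i0 (Set.Icc 0 t) i)) =
        ENNReal.ofReal t := by
    simp_rw [hp, ENNReal.ofReal_prod_of_nonneg fun k _ => hq_nonneg k _]
    rw [lintegral_pi_prod_autoregressive _ hd (fun k => (hq_meas k).ennreal_ofReal)
      (fun k x y h => by rw [hq_dep k x y h]) (fun j hj x => ?_) 0]
    · rw [Function.update_self, setLIntegral_congr_fun measurableSet_Icc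
        fun s hs => by rw [hq0 _ (by simpa using ⟨hs.1, hs.2.trans ht.2⟩), ENNReal.ofReal_one]]
      simp
    · rw [Function.update_of_ne (by simp [Fin.ext_iff, i0]; omega),
        ← ofReal_integral_eq_lintegral_ofReal (.of_integral_ne_zero (by simp [I, hq_norm]))
          (ae_of_all _ fun _ => hq_nonneg _ _), hq_norm, ENNReal.ofReal_one]
  rw [setOf_apply_le_inter_univ_pi_Icc k ht.2,
    ← setIntegral_univ_pi_comp_perm (Equiv.swap i0 k) _ (hinv _), hswap, volume_pi,
    Measure.restrict_pi_pi, integral_eq_lintegral_of_nonneg_ae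
      (ae_of_all _ fun u => by rw [hp]; exact Finset.prod_nonneg fun k _ => hq_nonneg k u)
      (Measurable.aestronglyMeasurable (by rw [funext hp]; fun_prop)), hlint,
    ENNReal.toReal_ofReal ht.1]
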